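/- Under rPGD with AAᵀ = I and η = 1/g_t²: g_t²‖v_t‖² − g_{t−1}²‖v_{t−1}‖² = (g_t²/‖v_{t−1}‖² − g_{t−1}²)(1 − ‖A w_{t−1}‖²) = (g_t² − g_{t−1}²‖v_{t−1}‖²)(1 − ‖A w_t‖²). -/

import Mathlib

/-!
Because `A Aᵀ = I`, the map `P = AᵀA` is idempotent and fixes the row space `(ker A)ᗮ`, which
contains `w*` and on which `A` is isometric; moreover `‖x − P x‖² = ‖x‖² − ‖A x‖²`. An rPGD step
`v = w − g⁻¹ P(g w − g* w*)` therefore leaves the kernel component `w − P w` unchanged and moves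
`A w` to `(g*/g) A w*`. This gives `g²‖v‖² = g²(1 − ‖A w‖²) + g*²`, and after normalising
`w_t = v_{t−1}/‖v_{t−1}‖` also `1 − ‖A w_t‖² = (1 − ‖A w_{t−1}‖²)/‖v_{t−1}‖²`; both identities
then follow by algebra.
-/

open scoped RealInnerProductSpace

namespace ContinuousLinearMap

variable {E F : Type*} [NormedAddCommGroup E] [InnerProductSpace ℝ E] [CompleteSpace E]
  [NormedAddCommGroup F] [InnerProductSpace ℝ F] [CompleteSpace F]
  {A : E →L[ℝ] F}

section CoIsometry

variable (hA : A ∘L adjoint A = ContinuousLinearMap.id ℝ F)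
include hA

lemma apply_adjoint_apply_of_comp_adjoint_eq_id (y : F) : A (adjoint A y) = y :=
  congrArg (fun T : F →L[ℝ] F => T y) hA

lemma norm_adjoint_apply_of_comp_adjoint_eq_id (y : F) : ‖adjoint A y‖ = ‖y‖ := by
  have h : ‖adjoint A y‖ ^ 2 = ‖y‖ ^ 2 := by
    rw [← real_inner_self_eq_norm_sq, adjoint_inner_left,
      apply_adjoint_apply_of_comp_adjoint_eq_id hA, real_inner_self_eq_norm_sq]
  exact (sq_eq_sq₀ (norm_nonneg _) (norm_nonneg _)).mp h

lemma apply_sub_adjoint_apply_apply_eq_zero (x : E) : A (x - adjoint A (A x)) = 0 := by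
  rw [map_sub, apply_adjoint_apply_of_comp_adjoint_eq_id hA, sub_self]

lemma norm_sub_adjoint_apply_apply_sq (x : E) :
    ‖x - adjoint A (A x)‖ ^ 2 = ‖x‖ ^ 2 - ‖A x‖ ^ 2 := by
  rw [norm_sub_sq_real, adjoint_inner_right, real_inner_self_eq_norm_sq,
    norm_adjoint_apply_of_comp_adjoint_eq_id hA]
  ring

lemma norm_apply_le_of_comp_adjoint_eq_id (x : E) : ‖A x‖ ≤ ‖x‖ := by
  have h := norm_sub_adjoint_apply_apply_sq hA x
  exact (pow_le_pow_iff_left₀ (norm_nonneg _) (norm_nonneg _) two_ne_zero).1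
    (by nlinarith [sq_nonneg ‖x - adjoint A (A x)‖])

lemma adjoint_apply_apply_of_mem_orthogonal_ker {x : E}
    (hx : x ∈ (LinearMap.ker A.toLinearMap)ᗮ) : adjoint A (A x) = x := by
  have hker : x - adjoint A (A x) ∈ LinearMap.ker A.toLinearMap :=
    apply_sub_adjoint_apply_apply_eq_zero hA x
  have horth : x - adjoint A (A x) ∈ (LinearMap.ker A.toLinearMap)ᗮ := by
    refine Submodule.sub_mem _ hx ((Submodule.mem_orthogonal _ _).2 fun u hu => ?_)
    rw [adjoint_inner_right, show A u = 0 from hu, inner_zero_left]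
  have h0 := inner_self_eq_zero.mp (Submodule.inner_right_of_mem_orthogonal hker horth)
  exact (sub_eq_zero.mp h0).symm

lemma norm_apply_of_mem_orthogonal_ker {x : E}
    (hx : x ∈ (LinearMap.ker A.toLinearMap)ᗮ) : ‖A x‖ = ‖x‖ := by
  rw [← norm_adjoint_apply_of_comp_adjoint_eq_id hA,
    adjoint_apply_apply_of_mem_orthogonal_ker hA hx]

end CoIsometry

end ContinuousLinearMap

open ContinuousLinearMap

section RPGD

variable {E F : Type*} [NormedAddCommGroup E] [InnerProductSpace ℝ E] [CompleteSpace E]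
  [NormedAddCommGroup F] [InnerProductSpace ℝ F] [CompleteSpace F]

noncomputable def rpgdStep (A : E →L[ℝ] F) (gstar : ℝ) (wstar : E) (g : ℝ) (w : E) : E :=
  w - g⁻¹ • adjoint A (A (g • w - gstar • wstar))

variable {A : E →L[ℝ] F} (hA : A ∘L adjoint A = ContinuousLinearMap.id ℝ F)
  {gstar : ℝ} {wstar : E} {g : ℝ} {w : E}
include hA

lemma apply_rpgdStep (hg : g ≠ 0) : A (rpgdStep A gstar wstar g w) = (gstar / g) • A wstar := by
  rw [rpgdStep, map_sub, map_smul, apply_adjoint_apply_of_comp_adjoint_eq_id hA, map_sub,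
    map_smul, map_smul, smul_sub, smul_smul, smul_smul, inv_mul_cancel₀ hg, one_smul,
    sub_sub_cancel, div_eq_inv_mul]

lemma rpgdStep_sub_adjoint_apply_apply :
    rpgdStep A gstar wstar g w - adjoint A (A (rpgdStep A gstar wstar g w)) =
      w - adjoint A (A w) := by
  rw [rpgdStep]
  generalize A (g • w - gstar • wstar) = y
  rw [map_sub A, map_smul A, apply_adjoint_apply_of_comp_adjoint_eq_id hA, map_sub, map_smul]
  abel

lemma norm_rpgdStep_sq_sub_norm_apply_sq :
    ‖rpgdStep A gstar wstar g w‖ ^ 2 - ‖A (rpgdStep A gstar wstar g w)‖ ^ 2 =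
      ‖w‖ ^ 2 - ‖A w‖ ^ 2 := by
  rw [← norm_sub_adjoint_apply_apply_sq hA, ← norm_sub_adjoint_apply_apply_sq hA,
    rpgdStep_sub_adjoint_apply_apply hA]

lemma sq_mul_norm_rpgdStep_sq (hg : g ≠ 0) :
    g ^ 2 * ‖rpgdStep A gstar wstar g w‖ ^ 2 =
      g ^ 2 * (‖w‖ ^ 2 - ‖A w‖ ^ 2) + gstar ^ 2 * ‖A wstar‖ ^ 2 := by
  have hAv : ‖A (rpgdStep A gstar wstar g w)‖ ^ 2 = (gstar / g) ^ 2 * ‖A wstar‖ ^ 2 := by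
    rw [apply_rpgdStep hA hg, norm_smul, mul_pow, Real.norm_eq_abs, sq_abs]
  rw [← norm_rpgdStep_sq_sub_norm_apply_sq hA, hAv]
  field_simp
  ring

end RPGD

/-- Under rPGD with `AAᵀ = I` and `η = 1/g_t²`, the recursion identity
`g_t²‖v_t‖² − g_{t−1}²‖v_{t−1}‖² = (g_t²/‖v_{t−1}‖² − g_{t−1}²)(1 − ‖A w_{t−1}‖²)
 = (g_t² − g_{t−1}²‖v_{t−1}‖²)(1 − ‖A w_t‖²)` holds, where
`v_s = w_s − (1/g_s)Aᵀ A(g_s w_s − g* w*)` and `w_t = v_{t−1}/‖v_{t−1}‖`. -/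
theorem stmt17 (m d : ℕ)
    (A : EuclideanSpace ℝ (Fin d) →L[ℝ] EuclideanSpace ℝ (Fin m))
    (hA : A.comp (ContinuousLinearMap.adjoint A) =
      ContinuousLinearMap.id ℝ (EuclideanSpace ℝ (Fin m)))
    (gstar : ℝ) (hgs : 0 < gstar)
    (wstar : EuclideanSpace ℝ (Fin d)) (hws : ‖wstar‖ = 1)
    (hwsrow : wstar ∈ (LinearMap.ker A.toLinearMap)ᗮ)
    (gprev gt : ℝ) (hgprev : gprev ≠ 0) (hgt : gt ≠ 0)
    (wprev : EuclideanSpace ℝ (Fin d)) (hwprev : ‖wprev‖ = 1)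
    (vprev : EuclideanSpace ℝ (Fin d))
    (hvprev : vprev = wprev -
      gprev⁻¹ • (ContinuousLinearMap.adjoint A) (A (gprev • wprev - gstar • wstar)))
    (wt : EuclideanSpace ℝ (Fin d)) (hwt : wt = ‖vprev‖⁻¹ • vprev)
    (vt : EuclideanSpace ℝ (Fin d))
    (hvt : vt = wt -
      gt⁻¹ • (ContinuousLinearMap.adjoint A) (A (gt • wt - gstar • wstar))) :
    gt^2 * ‖vt‖^2 - gprev^2 * ‖vprev‖^2 =
      (gt^2 / ‖vprev‖^2 - gprev^2) * (1 - ‖A wprev‖^2) ∧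
    gt^2 * ‖vt‖^2 - gprev^2 * ‖vprev‖^2 =
      (gt^2 - gprev^2 * ‖vprev‖^2) * (1 - ‖A wt‖^2) := by
  change vprev = rpgdStep A gstar wstar gprev wprev at hvprev
  change vt = rpgdStep A gstar wstar gt wt at hvt
  have hAws : ‖A wstar‖ = 1 := (norm_apply_of_mem_orthogonal_ker hA hwsrow).trans hws
  have hprev : gprev ^ 2 * ‖vprev‖ ^ 2 = gprev ^ 2 * (1 - ‖A wprev‖ ^ 2) + gstar ^ 2 := by
    rw [hvprev, sq_mul_norm_rpgdStep_sq hA hgprev, hwprev, hAws, one_pow, mul_one]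
  have hprev_kernel : 0 ≤ 1 - ‖A wprev‖ ^ 2 := by
    nlinarith [norm_apply_le_of_comp_adjoint_eq_id hA wprev, norm_nonneg (A wprev)]
  have hvprev_pos : 0 < ‖vprev‖ := by
    refine norm_pos_iff.2 fun h0 => ?_
    rw [h0, norm_zero] at hprev
    nlinarith [mul_nonneg (sq_nonneg gprev) hprev_kernel]
  have hwt_norm : ‖wt‖ = 1 := hwt ▸ norm_smul_inv_norm (norm_pos_iff.1 hvprev_pos)
  have hcur : gt ^ 2 * ‖vt‖ ^ 2 = gt ^ 2 * (1 - ‖A wt‖ ^ 2) + gstar ^ 2 := by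
    rw [hvt, sq_mul_norm_rpgdStep_sq hA hgt, hwt_norm, hAws, one_pow, mul_one]
  have hkernel : 1 - ‖A wt‖ ^ 2 = (1 - ‖A wprev‖ ^ 2) / ‖vprev‖ ^ 2 := by
    have h : ‖vprev‖ ^ 2 - ‖A vprev‖ ^ 2 = 1 - ‖A wprev‖ ^ 2 := by
      rw [hvprev, norm_rpgdStep_sq_sub_norm_apply_sq hA, hwprev, one_pow]
    rw [← h, hwt, map_smul, norm_smul, Real.norm_eq_abs, abs_inv, abs_norm]
    field_simp
  constructor <;>
  · rw [hcur, hkernel]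
    field_simp
    linear_combination (-‖vprev‖ ^ 2) * hprev
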